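/- Under the hypotheses of the even-N identifiability lemma (S invertible, S e_1 = e_1, e_2^T S = e_2^T, S A(h) = A(h')S with A(h) tridiagonal antisymmetric with nonzero superdiagonal entries), the first column and first row of the products force h_1 = h'_1 and the first row of S to equal e_1^T. -/

import Mathlib

/-! Since `e₁ᵀ S = e₁ᵀ` and `S e₀ = e₀` (indices from 0), the `(1, 0)` entry of
`S A(h) = A(h') S` is `A(h)₁₀ = A(h')₁₀`, i.e. `h₀ = h'₀`. Row 0 then gives
`(S₀ - e₀)ᵀ A(h) = h'₀ e₁ᵀ - h₀ e₁ᵀ = 0`. Column `j` of `vᵀ A(h)` is `v_{j-1} h_{j-1} - v_{j+1} h_j`,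
so with all `h_j ≠ 0` a vector with `vᵀ A(h) = 0` and `v₀ = 0` vanishes, whence `S₀ = e₀`. -/

open Matrix

/-- The n×n tridiagonal antisymmetric matrix with superdiagonal entries
`h 0, h 1, ..., h (n-2)`. -/
def triA (n : ℕ) (h : ℕ → ℝ) : Matrix (Fin n) (Fin n) ℝ :=
  Matrix.of fun i j =>
    if (i : ℕ) + 1 = (j : ℕ) then h i
    else if (j : ℕ) + 1 = (i : ℕ) then -(h j) else 0

lemma apply_eq_of_mul_eq_mul_of_row_of_col {n R : Type*} [Fintype n] [DecidableEq n]
    [NonAssocSemiring R] {A B S : Matrix n n R} (hAS : S * A = B * S) {i j : n}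
    (hrow : S.row i = Pi.single i 1) (hcol : S.col j = Pi.single j 1) : A i j = B i j :=
  calc A i j = (S.row i ᵥ* A) j := by rw [hrow, single_one_vecMul]; rfl
    _ = (B *ᵥ S.col j) i := congrFun (congrFun hAS i) j
    _ = B i j := by rw [hcol, mulVec_single_one]; rfl

lemma triA_apply {n : ℕ} (h : ℕ → ℝ) (i j : Fin n) :
    triA n h i j =
      if (i : ℕ) + 1 = (j : ℕ) then h i
      else if (j : ℕ) + 1 = (i : ℕ) then -(h j) else 0 := rfl

lemma triA_one_zero (m : ℕ) (h : ℕ → ℝ) : triA (m + 2) h 1 0 = -h 0 := by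
  simp [triA_apply]

lemma row_zero_triA (m : ℕ) (h : ℕ → ℝ) : (triA (m + 2) h).row 0 = h 0 • Pi.single 1 1 := by
  ext j
  rcases Fin.eq_zero_or_eq_succ j with rfl | ⟨k, rfl⟩
  · simp [triA_apply]
  · rcases Fin.eq_zero_or_eq_succ k with rfl | ⟨l, rfl⟩
    · simp [triA_apply]
    · simp [triA_apply, Fin.ext_iff]

lemma vecMul_triA_apply_of_forall_le {n : ℕ} (h : ℕ → ℝ) {v : Fin n → ℝ} {i j : Fin n}
    (hij : (i : ℕ) = j + 1) (hv : ∀ l : Fin n, (l : ℕ) ≤ j → v l = 0) :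
    (v ᵥ* triA n h) j = -(v i * h j) := by
  rw [vecMul, dotProduct, Finset.sum_eq_single i]
  · rw [triA_apply, if_neg (by omega), if_pos (by omega)]
    ring
  · intro l _ hli
    by_cases hlj : (l : ℕ) ≤ j
    · simp [hv l hlj]
    · have : (j : ℕ) + 1 < l := by
        have : (l : ℕ) ≠ i := Fin.val_ne_of_ne hli
        omega
      rw [triA_apply, if_neg (by omega), if_neg (by omega), mul_zero]
  · simp

lemma eq_zero_of_vecMul_triA_eq_zero {n : ℕ} [NeZero n] {h : ℕ → ℝ}
    (hh : ∀ i, i + 1 < n → h i ≠ 0) {v : Fin n → ℝ} (hv : v ᵥ* triA n h = 0) (hv0 : v 0 = 0) :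
    v = 0 := by
  suffices ∀ k, ∀ l : Fin n, (l : ℕ) ≤ k → v l = 0 from funext fun l => this l l le_rfl
  intro k
  induction k with
  | zero =>
    intro l hl
    rwa [show l = 0 from Fin.ext (by simpa using hl)]
  | succ k ih =>
    intro l hl
    rcases Nat.lt_or_eq_of_le hl with hlt | hl
    · exact ih l (by omega)
    · have hkn : k + 1 < n := hl ▸ l.isLt
      have hcol := vecMul_triA_apply_of_forall_le h (j := ⟨k, by omega⟩) hl ih
      rw [hv, Pi.zero_apply, eq_comm, neg_eq_zero] at hcol
      exact (mul_eq_zero.mp hcol).resolve_right (hh k hkn)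

theorem stmt_6 (n : ℕ) (hn : 2 ≤ n) (h h' : ℕ → ℝ)
    (hh : ∀ i, i < n - 1 → h i ≠ 0)
    (S : Matrix (Fin n) (Fin n) ℝ)
    (hB : S.mulVec (Pi.single ⟨0, by omega⟩ 1) = Pi.single ⟨0, by omega⟩ 1)
    (hC : Matrix.vecMul (Pi.single ⟨1, by omega⟩ 1) S = Pi.single ⟨1, by omega⟩ 1)
    (hAS : S * triA n h = triA n h' * S) :
    h 0 = h' 0
    ∧ ∀ j : Fin n, S ⟨0, by omega⟩ j = if j = ⟨0, by omega⟩ then 1 else 0 := by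
  obtain ⟨m, rfl⟩ : ∃ m, n = m + 2 := ⟨n - 2, by omega⟩
  change S *ᵥ Pi.single 0 1 = Pi.single 0 1 at hB
  change Pi.single 1 1 ᵥ* S = Pi.single 1 1 at hC
  rw [mulVec_single_one] at hB
  rw [single_one_vecMul] at hC
  have h_zero : h 0 = h' 0 := by
    simpa [triA_one_zero] using apply_eq_of_mul_eq_mul_of_row_of_col hAS hC hB
  have hrow : (S.row 0 - Pi.single 0 1) ᵥ* triA (m + 2) h = 0 := by
    have : S.row 0 ᵥ* triA (m + 2) h = (triA (m + 2) h').row 0 ᵥ* S := congrFun hAS 0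
    rw [sub_vecMul, this, single_one_vecMul, row_zero_triA, row_zero_triA, smul_vecMul,
      single_one_vecMul, hC, h_zero, sub_self]
  have hrow_zero0 : (S.row 0 - Pi.single 0 1 : Fin (m + 2) → ℝ) 0 = 0 := by
    simpa [sub_eq_zero] using congrFun hB 0
  have hrow_zero := eq_zero_of_vecMul_triA_eq_zero (fun i hi => hh i (by omega)) hrow hrow_zero0
  refine ⟨h_zero, fun j => ?_⟩
  have hj := congrFun hrow_zero j
  rw [Pi.sub_apply, Pi.zero_apply, sub_eq_zero, Pi.single_apply] at hj
  exact hj
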